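/- arXiv:1403.7401 — 2 statements merged into one kernel-verified Lean document; each statement's English description precedes it below -/
import Mathlib

section
/- The normalized twisted Connes operator squares to zero modulo the twist: for B(a_0,…,a_n) = Σ_{i=0}^n (−1)^{ni} (1, g(a_i),…,g(a_n), a_0,…,a_{i−1}) acting on the normalized complex Ā^{⊗n} ⊗ A (i.e., modulo degenerate elements containing a 1 in positions 1 through n), one has B ∘ B = 0 on the quotient A ⊗ Ā^{⊗n}/(1 − T_g). -/
open scoped TensorProduct
open PiTensorProduct

abbrev Chains (k A : Type*) [CommRing k] [Ring A] [Algebra k A] (n : ℕ) :=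
  ⨂[k] (_ : Fin (n + 1)), A

noncomputable def tdiag {k A : Type*} [CommRing k] [Ring A] [Algebra k A] (g : A ≃ₐ[k] A) (n : ℕ) :
    Chains k A n →ₗ[k] Chains k A n :=
  PiTensorProduct.map (fun _ => g.toLinearMap)

/-- The submodule of degenerate elements: the span of pure tensors `(a_0,…,a_n)` having
`a_i = 1` for some `i ≥ 1`.  The quotient `A^{⊗(n+1)}/Deg` is the normalized complex
`A ⊗ Ā^{⊗n}`, with `Ā = A/k·1`. -/
def Deg (k A : Type*) [CommRing k] [Ring A] [Algebra k A] (n : ℕ) :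
    Submodule k (Chains k A n) :=
  Submodule.span k
    {x | ∃ (a : Fin (n + 1) → A) (i : Fin (n + 1)), 0 < (i : ℕ) ∧ a i = 1 ∧ x = tprod k a}

/-- The `i`-th summand of the twisted Connes operator:
`(1, g(a_i),…,g(a_n), a_0,…,a_{i-1})`. -/
def connesFun {k A : Type*} [CommRing k] [Ring A] [Algebra k A] (g : A ≃ₐ[k] A) {n : ℕ}
    (i : Fin (n + 1)) (a : Fin (n + 1) → A) : Fin (n + 2) → A :=
  fun j =>
    if (j : ℕ) = 0 then 1
    else if h1 : (j : ℕ) ≤ n + 1 - (i : ℕ) then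
      g (a ⟨(i : ℕ) + (j : ℕ) - 1, by have := i.isLt; have := j.isLt; omega⟩)
    else a ⟨(j : ℕ) - (n + 2 - (i : ℕ)), by have := i.isLt; have := j.isLt; omega⟩

lemma connesFun_sq_deg {k A : Type*} [CommRing k] [Ring A] [Algebra k A] (g : A ≃ₐ[k] A) {n : ℕ}
    (i : Fin (n + 1)) (j : Fin (n + 2)) (a : Fin (n + 1) → A) :
    tprod k (connesFun g j (connesFun g i a)) ∈ Deg k A (n + 2) := by
  apply Submodule.subset_span
  have hj := j.isLt
  refine ⟨connesFun g j (connesFun g i a), ?_⟩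
  by_cases hj0 : (j : ℕ) = 0
  · refine ⟨⟨1, by omega⟩, by simp, ?_, rfl⟩
    simp only [connesFun, hj0]
    norm_num
  · refine ⟨⟨n + 3 - (j : ℕ), by omega⟩, (by show 0 < n + 3 - (j:ℕ); omega), ?_, rfl⟩
    simp only [connesFun]
    rw [if_neg (show ¬ (n + 3 - (j:ℕ) = 0) by omega),
      dif_neg (show ¬ (n + 3 - (j:ℕ) ≤ n + 1 + 1 - (j:ℕ)) by omega),
      if_pos (show (n + 3 - (j:ℕ)) - (n + 1 + 2 - (j:ℕ)) = 0 by omega)]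

/-- the normalized twisted Connes operator
`B(a_0,…,a_n) = Σ_i (-1)^{ni} (1, g(a_i),…,g(a_n), a_0,…,a_{i-1})` satisfies `B ∘ B = 0`
on the normalized complex modulo `1 - T_g`, i.e. `B(B(x))` lies in the submodule generated
by degenerate elements together with the image of `1 - T_g`. -/
theorem twisted_connes_operator_sq_zero (k A : Type*) [CommRing k] [Ring A] [Algebra k A]
    (g : A ≃ₐ[k] A)
    (B : ∀ n : ℕ, Chains k A n →ₗ[k] Chains k A (n + 1))
    (hB : ∀ (n : ℕ) (a : Fin (n + 1) → A),
      B n (tprod k a) =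
        ∑ i : Fin (n + 1), ((-1 : ℤ) ^ (n * (i : ℕ))) • tprod k (connesFun g i a)) :
    ∀ (n : ℕ) (x : Chains k A n),
      B (n + 1) (B n x) ∈
        Deg k A (n + 2) ⊔ LinearMap.range (LinearMap.id - tdiag g (n + 2)) := by
  intro n x
  induction x using PiTensorProduct.induction_on with
  | smul_tprod c a =>
    rw [map_smul, map_smul]
    apply Submodule.smul_mem
    rw [hB, map_sum]
    refine Submodule.sum_mem _ fun i _ => ?_
    rw [map_zsmul, hB]
    refine Submodule.smul_of_tower_mem _ _ (Submodule.sum_mem _ fun j _ => ?_)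
    exact Submodule.smul_of_tower_mem _ _
      (Submodule.mem_sup_left (connesFun_sq_deg g i j a))
  | add x y hx hy =>
    rw [map_add, map_add]
    exact Submodule.add_mem _ hx hy
end

section
/- Conjugacy class decomposition (Shapiro's lemma application): for a finite group G acting on a k-algebra A, the coinvariants (k[G] ⊗ A^{⊗(n+1)})_G under the G-action h·(g / a_0,…,a_n) = (hgh^{−1} / h(a_0),…,h(a_n)) decompose as a direct sum over conjugacy classes [g] of G of the coinvariants A^{⊗(n+1)}/G^g, where G^g is the centralizer of g in G acting diagonally on A^{⊗(n+1)}. -/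
open scoped TensorProduct DirectSum
open PiTensorProduct

/-- The `G`-action on `k[G] ⊗ A^{⊗(n+1)}` (realized as `G →₀ A^{⊗(n+1)}`):
`h · (g / a_0,…,a_n) = (hgh⁻¹ / h(a_0),…,h(a_n))`. -/
noncomputable def actG {k A G : Type*} [CommRing k] [Ring A] [Algebra k A] [Group G]
    (φ : G →* (A ≃ₐ[k] A)) (h : G) (n : ℕ) :
    (G →₀ Chains k A n) →ₗ[k] (G →₀ Chains k A n) :=
  (Finsupp.lmapDomain (Chains k A n) k (fun g => h * g * h⁻¹)) ∘ₗ
    (Finsupp.mapRange.linearMap (tdiag (φ h) n))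

/-- The submodule of `G`-coinvariant relations `y - h·y` in `k[G] ⊗ A^{⊗(n+1)}`. -/
noncomputable def coinvRelG {k A G : Type*} [CommRing k] [Ring A] [Algebra k A] [Group G]
    (φ : G →* (A ≃ₐ[k] A)) (n : ℕ) : Submodule k (G →₀ Chains k A n) :=
  Submodule.span k {x | ∃ (h : G) (y : G →₀ Chains k A n), x = y - actG φ h n y}

/-- The submodule of relations for the diagonal action of the centralizer `G^g` on the
stalk `A^{⊗(n+1)}` over `g`. -/
noncomputable def centRel {k A G : Type*} [CommRing k] [Ring A] [Algebra k A] [Group G]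
    (φ : G →* (A ≃ₐ[k] A)) (g : G) (n : ℕ) : Submodule k (Chains k A n) :=
  Submodule.span k
    {x | ∃ h ∈ Subgroup.centralizer {g}, ∃ y : Chains k A n, x = y - tdiag (φ h) n y}

/-!
The conjugation action of `G` permutes the summands of `G →₀ M`, so the coinvariants split over
the conjugacy classes. The summand of a class with representative `g₀` is induced from the
centralizer `G^{g₀}`, and (Shapiro) its coinvariants are `M_{G^{g₀}}`: an element `m` sitting over
`a g₀ a⁻¹` goes to the class of `a⁻¹ m`, which is well defined because two such `a` differ by an
element of the centralizer; the inverse sends the class of `m` to `m` sitting over `g₀`.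
-/

namespace Representation.Coinvariants

variable {k G V : Type*} [CommRing k] [Monoid G] [AddCommGroup V] [Module k V]

lemma ker_eq_span_sub (ρ : Representation k G V) :
    ker ρ = Submodule.span k {x | ∃ g y, x = y - ρ g y} := by
  rw [ker, ← Submodule.span_neg]
  congr 1
  ext x
  simp only [Set.mem_neg, Set.mem_range, Prod.exists, Set.mem_ofPred_eq]
  exact exists₂_congr fun g y => by rw [eq_comm, neg_eq_iff_eq_neg, neg_sub]

lemma ker_comp_subtype_eq_span_sub {G : Type*} [Group G] (ρ : Representation k G V)
    (S : Subgroup G) :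
    ker (ρ.comp S.subtype) = Submodule.span k {x | ∃ g ∈ S, ∃ y, x = y - ρ g y} := by
  simp only [ker_eq_span_sub, MonoidHom.comp_apply, Subgroup.coe_subtype, Subtype.exists,
    exists_prop]

end Representation.Coinvariants

section

variable {G : Type*} [Group G]

namespace ConjClasses

lemma exists_conj_out (g : G) :
    ∃ a : G, a * (ConjClasses.mk g).out * a⁻¹ = g :=
  isConj_iff.mp (ConjClasses.mk_eq_mk_iff_isConj.mp (Quotient.out_eq _))

noncomputable def outConjugator (g : G) : G :=
  (exists_conj_out g).choose

lemma outConjugator_conj_out (g : G) :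
    outConjugator g * (ConjClasses.mk g).out * (outConjugator g)⁻¹ = g :=
  (exists_conj_out g).choose_spec

end ConjClasses

lemma Subgroup.inv_mul_mem_centralizer_of_conj_eq {a b g : G}
    (h : a * g * a⁻¹ = b * g * b⁻¹) : a⁻¹ * b ∈ centralizer {g} := by
  rw [mem_centralizer_singleton_iff]
  calc a⁻¹ * b * g = a⁻¹ * (b * g * b⁻¹) * b := by group
    _ = g * (a⁻¹ * b) := by rw [← h]; group

end

namespace Representation

variable {k G M : Type*} [CommRing k] [Group G] [AddCommGroup M] [Module k M]
  (ρ : Representation k G M)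

noncomputable def conjFinsupp : Representation k G (G →₀ M) where
  toFun h := Finsupp.lmapDomain M k (fun g => h * g * h⁻¹) ∘ₗ Finsupp.mapRange.linearMap (ρ h)
  map_one' := by ext g m : 2; simp
  map_mul' a b := by ext g m : 2; simp [mul_assoc]

@[simp]
lemma conjFinsupp_single (h g : G) (m : M) :
    ρ.conjFinsupp h (Finsupp.single g m) = Finsupp.single (h * g * h⁻¹) (ρ h m) := by
  simp [conjFinsupp]

abbrev centralizerRep (g : G) : Representation k (Subgroup.centralizer {g}) M :=
  ρ.comp (Subgroup.centralizer {g}).subtype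

/-- Identifies the fibre over `a * g * a⁻¹` with the stalk over `g`. -/
noncomputable def toStalk (g a : G) : M →ₗ[k] (ρ.centralizerRep g).Coinvariants :=
  Coinvariants.mk _ ∘ₗ ρ a⁻¹

lemma toStalk_congr {g a b : G} (h : a * g * a⁻¹ = b * g * b⁻¹) :
    ρ.toStalk g a = ρ.toStalk g b := by
  ext m
  have hc := Subgroup.inv_mul_mem_centralizer_of_conj_eq h
  calc ρ.toStalk g a m = Coinvariants.mk _ (ρ.centralizerRep g ⟨a⁻¹ * b, hc⟩ (ρ b⁻¹ m)) := by
        simp [toStalk, ← Module.End.mul_apply, ← map_mul]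
    _ = ρ.toStalk g b m := Coinvariants.mk_self_apply _ _ _

lemma toStalk_mul_apply (g h a : G) (m : M) : ρ.toStalk g (h * a) (ρ h m) = ρ.toStalk g a m := by
  simp [toStalk, ← Module.End.mul_apply, ← map_mul]

lemma conjFinsupp_single_of_mem_centralizer {g h : G} (hh : h ∈ Subgroup.centralizer {g})
    (m : M) : ρ.conjFinsupp h (Finsupp.single g m) = Finsupp.single g (ρ h m) := by
  rw [conjFinsupp_single, Subgroup.mem_centralizer_singleton_iff.mp hh, mul_inv_cancel_right]

variable [DecidableEq (ConjClasses G)]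

noncomputable def toStalks :
    (G →₀ M) →ₗ[k] ⨁ c : ConjClasses G, (ρ.centralizerRep c.out).Coinvariants :=
  Finsupp.lsum k fun g =>
    DirectSum.lof k _ _ (ConjClasses.mk g) ∘ₗ ρ.toStalk _ (ConjClasses.outConjugator g)

lemma toStalks_single {c : ConjClasses G} {a g : G} (hg : a * c.out * a⁻¹ = g) (m : M) :
    ρ.toStalks (Finsupp.single g m) = DirectSum.lof k _ _ c (ρ.toStalk c.out a m) := by
  obtain rfl : ConjClasses.mk g = c :=
    (ConjClasses.mk_eq_mk_iff_isConj.mpr (isConj_iff.mpr ⟨a⁻¹, by rw [← hg]; group⟩)).trans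
      (Quotient.out_eq c)
  rw [toStalk_congr ρ (hg.trans (ConjClasses.outConjugator_conj_out g).symm)]
  simp [toStalks]

lemma toStalks_comp_conjFinsupp (h : G) : ρ.toStalks ∘ₗ ρ.conjFinsupp h = ρ.toStalks := by
  refine Finsupp.lhom_ext fun g m => ?_
  have hs := ConjClasses.outConjugator_conj_out g
  have hconj : (h * ConjClasses.outConjugator g) * (ConjClasses.mk g).out *
      (h * ConjClasses.outConjugator g)⁻¹ = h * g * h⁻¹ := by
    conv_rhs => rw [← hs]
    group
  rw [LinearMap.comp_apply, conjFinsupp_single, toStalks_single ρ hconj, toStalk_mul_apply,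
    toStalks_single ρ hs]

noncomputable def stalkToCoinvariants (g : G) :
    (ρ.centralizerRep g).Coinvariants →ₗ[k] ρ.conjFinsupp.Coinvariants :=
  Coinvariants.lift _ (Coinvariants.mk _ ∘ₗ Finsupp.lsingle g) fun h => by
    ext m
    simp only [LinearMap.comp_apply, Finsupp.lsingle_apply, MonoidHom.comp_apply,
      Subgroup.coe_subtype]
    rw [← conjFinsupp_single_of_mem_centralizer ρ h.2, Coinvariants.mk_self_apply]

noncomputable def coinvariantsConjFinsuppEquiv :
    ρ.conjFinsupp.Coinvariants ≃ₗ[k] ⨁ c : ConjClasses G, (ρ.centralizerRep c.out).Coinvariants :=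
  LinearEquiv.ofLinearMap
    (Coinvariants.lift _ ρ.toStalks ρ.toStalks_comp_conjFinsupp)
    (DirectSum.toModule k _ _ fun c => ρ.stalkToCoinvariants c.out)
    (by
      ext c m
      simp [stalkToCoinvariants, toStalks_single ρ (show 1 * c.out * 1⁻¹ = c.out by group),
        toStalk])
    (by
      ext g m
      have hs := ConjClasses.outConjugator_conj_out g
      simp only [stalkToCoinvariants, LinearMap.coe_comp, Function.comp_apply,
        Finsupp.lsingle_apply, Coinvariants.lift_mk, toStalks_single ρ hs, toStalk,
        DirectSum.toModule_lof, LinearMap.id_comp]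
      rw [← Coinvariants.mk_self_apply _ (ConjClasses.outConjugator g), conjFinsupp_single, hs,
        ← Module.End.mul_apply, ← map_mul, mul_inv_cancel, map_one, Module.End.one_apply])

end Representation


section Chains

open Representation

variable {k A G : Type*} [CommRing k] [Ring A] [Algebra k A] [Group G]

lemma tdiag_one (n : ℕ) : tdiag (1 : A ≃ₐ[k] A) n = LinearMap.id :=
  PiTensorProduct.map_id

lemma tdiag_mul (g g' : A ≃ₐ[k] A) (n : ℕ) : tdiag (g * g') n = tdiag g n ∘ₗ tdiag g' n := by
  unfold tdiag
  rw [← PiTensorProduct.map_comp]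
  rfl

noncomputable def tdiagRep (φ : G →* (A ≃ₐ[k] A)) (n : ℕ) :
    Representation k G (Chains k A n) where
  toFun h := tdiag (φ h) n
  map_one' := by
    change tdiag (φ 1) n = LinearMap.id
    rw [map_one, tdiag_one]
  map_mul' a b := by
    change tdiag (φ (a * b)) n = tdiag (φ a) n ∘ₗ tdiag (φ b) n
    rw [map_mul, tdiag_mul]

lemma coinvRelG_eq_ker (φ : G →* (A ≃ₐ[k] A)) (n : ℕ) :
    coinvRelG φ n = Coinvariants.ker (tdiagRep φ n).conjFinsupp := by
  rw [Coinvariants.ker_eq_span_sub]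
  rfl

lemma centRel_eq_ker (φ : G →* (A ≃ₐ[k] A)) (g : G) (n : ℕ) :
    centRel φ g n = Coinvariants.ker ((tdiagRep φ n).centralizerRep g) := by
  rw [Coinvariants.ker_comp_subtype_eq_span_sub]
  rfl

end Chains

theorem conjugacy_class_decomposition_general (k A G : Type*) [CommRing k] [Ring A] [Algebra k A]
    [Group G] (φ : G →* (A ≃ₐ[k] A)) (n : ℕ) :
    Nonempty (((G →₀ Chains k A n) ⧸ coinvRelG φ n) ≃ₗ[k]
      (⨁ c : ConjClasses G, (Chains k A n ⧸ centRel φ (Quotient.out c) n))) := by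
  classical
  exact ⟨Submodule.quotEquivOfEq _ _ (coinvRelG_eq_ker φ n) ≪≫ₗ
    (tdiagRep φ n).coinvariantsConjFinsuppEquiv ≪≫ₗ
    DFinsupp.mapRange.linearEquiv fun c =>
      Submodule.quotEquivOfEq _ _ (centRel_eq_ker φ (Quotient.out c) n).symm⟩

/-- for a finite group `G` acting on `A`, the `G`-coinvariants of
`k[G] ⊗ A^{⊗(n+1)}` (action `h·(g/a) = (hgh⁻¹/h(a))`) decompose, by Shapiro's lemma, as a
direct sum over the conjugacy classes `[g]` of `G` of the coinvariants `A^{⊗(n+1)}/G^g`,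
where `G^g` is the centralizer of `g` acting diagonally. -/
theorem conjugacy_class_decomposition (k A G : Type*) [CommRing k] [Ring A] [Algebra k A]
    [Group G] [Fintype G] (φ : G →* (A ≃ₐ[k] A)) (n : ℕ) :
    Nonempty (((G →₀ Chains k A n) ⧸ coinvRelG φ n) ≃ₗ[k]
      (⨁ c : ConjClasses G, (Chains k A n ⧸ centRel φ (Quotient.out c) n))) :=
  conjugacy_class_decomposition_general k A G φ n
end
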